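/- arXiv:0911.2892 — 2 statements merged into one kernel-verified Lean document; each statement's English description precedes it below -/
import Mathlib

section
/- Let f : [0,1] → ℝ be continuous, ε > 0, and let τ be a tagged partition of [0,1] whose mesh is at most ε. Then the Riemann sum I(f, τ) satisfies |I(f, τ) - ∫₀¹ f| ≤ ∫₀¹ ω(f, ε), where ω(f,ε)(x) = sup { |f(t) - f(s)| : t, s ∈ [x-ε, x+ε] ∩ [0,1] }. -/
/-!
Split both integrals along the partition. On a piece `[xₖ, xₖ₊₁]` of length at most `ε`, the tag
`tₖ` and every point `u` of the piece lie in `[u - ε, u + ε] ∩ [0,1]`, so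
`|f tₖ - f u| ≤ ω(f,ε)(u)`; integrating over the piece and summing gives the bound.
For this `ω(f,ε)` must be integrable: on `[0,1]` it is the supremum, over the fixed compact square
`[-ε,ε]²`, of the jointly continuous `(x, a, b) ↦ |f̃ (x + a) - f̃ (x + b)|`, where `f̃` is `f`
composed with the clamp to `[0,1]`, hence it is continuous.
-/

noncomputable def osc (f : ℝ → ℝ) (ε : ℝ) (x : ℝ) : ℝ :=
  sSup {d : ℝ | ∃ t ∈ Set.Icc (x - ε) (x + ε) ∩ Set.Icc (0:ℝ) 1,
                ∃ s ∈ Set.Icc (x - ε) (x + ε) ∩ Set.Icc (0:ℝ) 1,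
                d = |f t - f s|}

/-- A tagged partition of `[0,1]`. -/
structure TaggedPartition where
  n : ℕ
  x : ℕ → ℝ
  t : ℕ → ℝ
  n_pos : 0 < n
  x_zero : x 0 = 0
  x_last : x n = 1
  x_mono : ∀ k < n, x k < x (k+1)
  t_mem : ∀ k < n, t k ∈ Set.Icc (x k) (x (k+1))

/-- The mesh of the tagged partition is at most `δ`. -/
def TaggedPartition.meshLE (τ : TaggedPartition) (δ : ℝ) : Prop :=
  ∀ k < τ.n, τ.x (k+1) - τ.x k ≤ δ

/-- The Riemann sum of `f` over a tagged partition of `[0,1]`. -/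
def riemannSum (f : ℝ → ℝ) (τ : TaggedPartition) : ℝ :=
  ∑ k ∈ Finset.range τ.n, f (τ.t k) * (τ.x (k+1) - τ.x k)

/-- Riemann integrability on `[0,1]`: Riemann sums converge as the mesh tends to 0. -/
def RiemannIntegrableOn01 (f : ℝ → ℝ) : Prop :=
  ∃ A : ℝ, ∀ ε > 0, ∃ δ > 0, ∀ τ : TaggedPartition,
    τ.meshLE δ → |riemannSum f τ - A| < ε

open Set MeasureTheory

lemma Icc_inter_Icc_zero_one_eq_image_projIcc {ε x : ℝ} (hx : x ∈ Icc (0:ℝ) 1) :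
    Icc (x - ε) (x + ε) ∩ Icc (0:ℝ) 1 =
      (fun a => (projIcc 0 1 zero_le_one (x + a) : ℝ)) '' Icc (-ε) ε := by
  ext t
  constructor
  · rintro ⟨⟨htl, htr⟩, ht⟩
    refine ⟨t - x, ⟨by linarith, by linarith⟩, ?_⟩
    simp [projIcc_of_mem zero_le_one ht]
  · rintro ⟨a, ha, rfl⟩
    have hdist : |(projIcc 0 1 zero_le_one (x + a) : ℝ) - x| ≤ |a| := by
      simpa [projIcc_of_mem zero_le_one hx] using
        abs_projIcc_sub_projIcc (h := zero_le_one) (c := x + a) (d := x)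
    have ha' : |a| ≤ ε := abs_le.mpr ha
    obtain ⟨hl, hr⟩ := abs_le.mp (hdist.trans ha')
    exact ⟨⟨by linarith, by linarith⟩, Subtype.prop _⟩

lemma osc_eq_sSup_image (f : ℝ → ℝ) (ε : ℝ) {x : ℝ} (hx : x ∈ Icc (0:ℝ) 1) :
    osc f ε x = sSup ((fun p : ℝ × ℝ => |f (projIcc 0 1 zero_le_one (x + p.1)) -
      f (projIcc 0 1 zero_le_one (x + p.2))|) '' Icc (-ε) ε ×ˢ Icc (-ε) ε) := by
  rw [osc, Icc_inter_Icc_zero_one_eq_image_projIcc hx]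
  congr 1
  ext d
  constructor
  · rintro ⟨_, ⟨a, ha, rfl⟩, _, ⟨b, hb, rfl⟩, rfl⟩
    exact ⟨(a, b), ⟨ha, hb⟩, rfl⟩
  · rintro ⟨⟨a, b⟩, ⟨ha, hb⟩, rfl⟩
    exact ⟨_, ⟨a, ha, rfl⟩, _, ⟨b, hb, rfl⟩, rfl⟩

lemma continuousOn_osc {f : ℝ → ℝ} (hf : ContinuousOn f (Icc (0:ℝ) 1)) (ε : ℝ) :
    ContinuousOn (osc f ε) (Icc (0:ℝ) 1) := by
  have hg : Continuous fun y : ℝ => f (projIcc (0:ℝ) 1 zero_le_one y) :=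
    hf.comp_continuous (continuous_subtype_val.comp continuous_projIcc) fun y => Subtype.prop _
  refine ContinuousOn.congr (Continuous.continuousOn ?_) fun x hx => osc_eq_sSup_image f ε hx
  refine (isCompact_Icc.prod isCompact_Icc).continuous_sSup ?_
  exact ((hg.comp (by fun_prop)).sub (hg.comp (by fun_prop))).abs

lemma abs_sub_le_osc {f : ℝ → ℝ} (hf : ContinuousOn f (Icc (0:ℝ) 1)) {ε x t s : ℝ}
    (ht : t ∈ Icc (x - ε) (x + ε) ∩ Icc (0:ℝ) 1) (hs : s ∈ Icc (x - ε) (x + ε) ∩ Icc (0:ℝ) 1) :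
    |f t - f s| ≤ osc f ε x := by
  have hbdd : BddAbove ((fun p : ℝ × ℝ => |f p.1 - f p.2|) '' Icc (0:ℝ) 1 ×ˢ Icc (0:ℝ) 1) :=
    (isCompact_Icc.prod isCompact_Icc).bddAbove_image
      ((hf.comp continuousOn_fst fun p hp => hp.1).sub
        (hf.comp continuousOn_snd fun p hp => hp.2)).abs
  refine le_csSup (hbdd.mono ?_) ⟨t, ht, s, hs, rfl⟩
  rintro d ⟨t, ht, s, hs, rfl⟩
  exact ⟨(t, s), ⟨ht.2, hs.2⟩, rfl⟩

lemma abs_mul_sub_integral_le_integral_osc {f : ℝ → ℝ} (hf : ContinuousOn f (Icc (0:ℝ) 1))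
    {ε a b c : ℝ} (hab : a ≤ b) (ha : 0 ≤ a) (hb : b ≤ 1) (hba : b - a ≤ ε) (hc : c ∈ Icc a b) :
    |f c * (b - a) - ∫ u in a..b, f u| ≤ ∫ u in a..b, osc f ε u := by
  have hIcc : Icc a b ⊆ Icc (0:ℝ) 1 := Icc_subset_Icc ha hb
  have hsub : uIcc a b ⊆ Icc (0:ℝ) 1 := by rwa [uIcc_of_le hab]
  have hconst : f c * (b - a) = ∫ _ in a..b, f c := by simp [mul_comm]
  rw [hconst, ← intervalIntegral.integral_sub intervalIntegrable_const
    ((hf.mono hsub).intervalIntegrable (μ := volume)), ← Real.norm_eq_abs]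
  refine intervalIntegral.norm_integral_le_of_norm_le hab (ae_of_all _ fun u hu => ?_)
    (((continuousOn_osc hf ε).mono hsub).intervalIntegrable (μ := volume))
  exact abs_sub_le_osc hf ⟨⟨by linarith [hu.2, hc.1], by linarith [hu.1, hc.2]⟩, hIcc hc⟩
    ⟨⟨by linarith, by linarith⟩, hIcc (Ioc_subset_Icc_self hu)⟩

namespace TaggedPartition

lemma strictMonoOn_x (τ : TaggedPartition) : StrictMonoOn τ.x (Iic τ.n) :=
  strictMonoOn_Iic_of_lt_succ fun k hk => by simpa using τ.x_mono k hk

lemma x_mem_Icc (τ : TaggedPartition) {k : ℕ} (hk : k ≤ τ.n) : τ.x k ∈ Icc (0:ℝ) 1 := by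
  constructor
  · rw [← τ.x_zero]
    exact τ.strictMonoOn_x.monotoneOn (Nat.zero_le τ.n) hk (Nat.zero_le k)
  · rw [← τ.x_last]
    exact τ.strictMonoOn_x.monotoneOn hk (le_refl τ.n) hk

lemma integral_eq_sum (τ : TaggedPartition) {g : ℝ → ℝ} (hg : IntervalIntegrable g volume 0 1) :
    ∫ u in (0:ℝ)..1, g u = ∑ k ∈ Finset.range τ.n, ∫ u in τ.x k..τ.x (k + 1), g u := by
  rw [intervalIntegral.sum_integral_adjacent_intervals, τ.x_zero, τ.x_last]
  intro k hk
  refine hg.mono_set (uIcc_subset_uIcc ?_ ?_) <;> rw [uIcc_of_le zero_le_one]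
  exacts [τ.x_mem_Icc hk.le, τ.x_mem_Icc hk]

end TaggedPartition

theorem stmt_4_general (f : ℝ → ℝ) (hf : ContinuousOn f (Set.Icc (0:ℝ) 1))
    (ε : ℝ) (τ : TaggedPartition) (hτ : τ.meshLE ε) :
    |riemannSum f τ - ∫ x in (0:ℝ)..1, f x| ≤ ∫ x in (0:ℝ)..1, osc f ε x := by
  rw [τ.integral_eq_sum (hf.intervalIntegrable_of_Icc (μ := volume) zero_le_one),
    τ.integral_eq_sum ((continuousOn_osc hf ε).intervalIntegrable_of_Icc (μ := volume) zero_le_one),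
    riemannSum, ← Finset.sum_sub_distrib]
  refine (Finset.abs_sum_le_sum_abs _ _).trans (Finset.sum_le_sum fun k hk => ?_)
  rw [Finset.mem_range] at hk
  exact abs_mul_sub_integral_le_integral_osc hf (τ.x_mono k hk).le (τ.x_mem_Icc hk.le).1
    (τ.x_mem_Icc hk).2 (hτ k hk) (τ.t_mem k hk)

theorem stmt_4 (f : ℝ → ℝ) (hf : ContinuousOn f (Set.Icc (0:ℝ) 1))
    (ε : ℝ) (hε : 0 < ε) (τ : TaggedPartition) (hτ : τ.meshLE ε) :
    |riemannSum f τ - ∫ x in (0:ℝ)..1, f x| ≤ ∫ x in (0:ℝ)..1, osc f ε x :=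
  stmt_4_general f hf ε τ hτ
end

section
/- Suppose f : [0,1] → ℝ is Darboux integrable in the sense that for every ε > 0 there exist piecewise linear functions f⁻, f⁺ on [0,1] with f⁻(x) ≤ f(x) ≤ f⁺(x) for all x ∈ [0,1] and ∫₀¹ (f⁺ - f⁻) < ε. Then for every ε > 0 there exist δ > 0 and a nonnegative piecewise linear function g with ∫₀¹ g < 1/2 such that for all x, y ∈ [0,1] with max(g(x), g(y)) < 1 and |x - y| < δ, one has |f(x) - f(y)| < ε. -/
/-- A polygonal (piecewise linear) function on `[0,1]` with rational breakpoints
and rational nodal values. -/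
def IsPolygonal (f : ℝ → ℝ) : Prop :=
  ∃ (m : ℕ) (p q : ℕ → ℚ), 0 < m ∧ p 0 = 0 ∧ p m = 1 ∧
    (∀ k < m, p k < p (k+1)) ∧
    ∀ k < m, ∀ x ∈ Set.Icc ((p k : ℝ)) ((p (k+1) : ℝ)),
      f x = ((q (k+1) : ℝ) * (x - (p k : ℝ)) + (q k : ℝ) * ((p (k+1) : ℝ) - x))
              / ((p (k+1) : ℝ) - (p k : ℝ))

/-!
A polygonal function is affine between consecutive points of a finite set of rational
breakpoints; on the uniform grid of mesh `1/N`, with `N` a common denominator of the breakpoints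
of `f⁻` and `f⁺`, the difference `f⁺ - f⁻` is affine cell by cell with rational nodal values,
hence polygonal. Take `g = c (f⁺ - f⁻)` with `c > 2/ε` and `∫ (f⁺ - f⁻) < 1/(2c)`. Where `g < 1`
the gap `f⁺ - f⁻` is below `ε/2`, so `f x - f y ≤ (f⁺ - f⁻) x + (f⁻ x - f⁻ y) < ε/2 + ε/2` as soon
as `|x - y|` is below a modulus of uniform continuity of `f⁻`, and symmetrically.
-/

open Set

def IsAffineOn (f : ℝ → ℝ) (s : Set ℝ) : Prop :=
  ∃ u v : ℝ, EqOn f (fun x => u * x + v) s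

namespace IsAffineOn

variable {f g : ℝ → ℝ} {s t : Set ℝ}

theorem mono (hf : IsAffineOn f s) (hts : t ⊆ s) : IsAffineOn f t :=
  let ⟨u, v, h⟩ := hf
  ⟨u, v, h.mono hts⟩

theorem congr (hg : IsAffineOn g s) (hfg : EqOn f g s) : IsAffineOn f s :=
  let ⟨u, v, h⟩ := hg
  ⟨u, v, hfg.trans h⟩

theorem sub (hf : IsAffineOn f s) (hg : IsAffineOn g s) : IsAffineOn (fun x => f x - g x) s := by
  obtain ⟨u, v, hf⟩ := hf
  obtain ⟨u', v', hg⟩ := hg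
  exact ⟨u - u', v - v', fun x hx => by simp only [hf hx, hg hx]; ring⟩

theorem continuousOn (hf : IsAffineOn f s) : ContinuousOn f s := by
  obtain ⟨u, v, hf⟩ := hf
  exact (continuous_const.mul continuous_id |>.add continuous_const).continuousOn.congr hf

theorem eq_interpolation {a b : ℝ} (hf : IsAffineOn f (Icc a b)) (hab : a < b) :
    ∀ x ∈ Icc a b, f x = (f b * (x - a) + f a * (b - x)) / (b - a) := by
  obtain ⟨u, v, hf⟩ := hf
  intro x hx
  rw [hf hx, hf (right_mem_Icc.2 hab.le), hf (left_mem_Icc.2 hab.le)]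
  field_simp [sub_ne_zero.2 hab.ne']
  ring

end IsAffineOn

theorem isAffineOn_interpolation (a b A B : ℝ) (s : Set ℝ) :
    IsAffineOn (fun x => (B * (x - a) + A * (b - x)) / (b - a)) s := by
  refine ⟨(B - A) / (b - a), (A * b - B * a) / (b - a), fun x _ => ?_⟩
  simp only
  rw [div_mul_eq_mul_div, ← add_div]
  ring

theorem exists_piece_of_lt {p : ℕ → ℝ} {m : ℕ} {a : ℝ} (h0 : p 0 ≤ a) (hm : a < p m) :
    ∃ k < m, p k ≤ a ∧ a < p (k + 1) := by
  classical
  have hka := Nat.findGreatest_spec (P := fun j => p j ≤ a) (Nat.zero_le m) h0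
  have hkm := Nat.findGreatest_le (P := fun j => p j ≤ a) m
  have hgt := fun n => Nat.findGreatest_is_greatest (P := fun j => p j ≤ a) (n := m) (k := n)
  generalize Nat.findGreatest (fun j => p j ≤ a) m = k at hka hkm hgt
  have hkm : k < m := hkm.lt_of_ne fun h => by subst h; linarith
  exact ⟨k, hkm, hka, not_le.1 (hgt (k + 1) (Nat.lt_succ_self k) hkm)⟩

theorem exists_piece_of_le {p : ℕ → ℝ} {m : ℕ} {a : ℝ} (hinc : ∀ k < m, p k < p (k + 1))
    (hm : 0 < m) (h0 : p 0 ≤ a) (h1 : a ≤ p m) : ∃ k < m, a ∈ Icc (p k) (p (k + 1)) := by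
  rcases h1.lt_or_eq with h1 | rfl
  · obtain ⟨k, hk, hka, hak⟩ := exists_piece_of_lt h0 h1
    exact ⟨k, hk, hka, hak.le⟩
  · obtain ⟨n, rfl⟩ := Nat.exists_eq_succ_of_ne_zero hm.ne'
    exact ⟨n, n.lt_succ_self, (hinc n n.lt_succ_self).le, le_rfl⟩

def IsPiecewiseAffine (S : Finset ℚ) (f : ℝ → ℝ) : Prop :=
  ∀ a b : ℝ, 0 ≤ a → a < b → b ≤ 1 → (∀ s ∈ S, (s : ℝ) ∉ Ioo a b) → IsAffineOn f (Icc a b)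

namespace IsPiecewiseAffine

variable {S T : Finset ℚ} {f g : ℝ → ℝ}

theorem mono (hf : IsPiecewiseAffine S f) (hST : S ⊆ T) : IsPiecewiseAffine T f :=
  fun a b ha hab hb hT => hf a b ha hab hb fun s hs => hT s (hST hs)

theorem sub (hf : IsPiecewiseAffine S f) (hg : IsPiecewiseAffine T g) :
    IsPiecewiseAffine (S ∪ T) fun x => f x - g x := fun a b ha hab hb hST =>
  ((hf.mono Finset.subset_union_left) a b ha hab hb hST).sub
    ((hg.mono Finset.subset_union_right) a b ha hab hb hST)

end IsPiecewiseAffine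

theorem Rat.cast_notMem_Ioo_div_of_den_dvd {s : ℚ} {N : ℕ} (hN : 0 < N) (hs : s.den ∣ N) (k : ℕ) :
    (s : ℝ) ∉ Ioo ((k : ℝ) / N) ((k + 1 : ℝ) / N) := by
  obtain ⟨M, hM⟩ := hs
  have hz : (s : ℝ) * N = (s.num * M : ℤ) := by
    rw [hM]; push_cast; rw [← mul_assoc]; exact_mod_cast congrArg (· * (M : ℚ)) s.mul_den_eq_num
  have hN' : (0 : ℝ) < N := by exact_mod_cast hN
  rintro ⟨hlo, hhi⟩
  rw [div_lt_iff₀ hN', hz] at hlo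
  rw [lt_div_iff₀ hN', hz] at hhi
  have : (k : ℤ) < s.num * M := by exact_mod_cast hlo
  have : s.num * M < (k : ℤ) + 1 := by exact_mod_cast hhi
  omega

namespace IsPolygonal

variable {f g : ℝ → ℝ}

theorem exists_isPiecewiseAffine (hf : IsPolygonal f) : ∃ S, IsPiecewiseAffine S f := by
  obtain ⟨m, p, q, -, h0, h1, -, hpiece⟩ := hf
  refine ⟨(Finset.range (m + 1)).image p, fun a b ha hab hb hS => ?_⟩
  obtain ⟨k, hk, hka, hak⟩ := exists_piece_of_lt (p := fun j => (p j : ℝ)) (m := m)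
    (by simpa [h0] using ha) (by simpa [h1] using hab.trans_le hb)
  have hbk : b ≤ p (k + 1) := not_lt.1 fun hkb =>
    hS _ (Finset.mem_image_of_mem p (Finset.mem_range.2 (by omega))) ⟨hak, hkb⟩
  exact ((isAffineOn_interpolation _ _ _ _ _).congr (hpiece k hk)).mono (Icc_subset_Icc hka hbk)

theorem continuousOn (hf : IsPolygonal f) : ContinuousOn f (Icc 0 1) := by
  obtain ⟨m, p, q, hm, h0, h1, hinc, hpiece⟩ := hf
  have hcover : Icc (0 : ℝ) 1 ⊆ ⋃ k : Fin m, Icc (p k : ℝ) (p (k + 1)) := fun x hx => by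
    obtain ⟨k, hk, hxk⟩ := exists_piece_of_le (p := fun j => (p j : ℝ))
      (fun k hk => by exact_mod_cast hinc k hk) hm (by simpa [h0] using hx.1)
      (by simpa [h1] using hx.2)
    exact mem_iUnion.2 ⟨⟨k, hk⟩, hxk⟩
  refine (LocallyFinite.continuousOn_iUnion (locallyFinite_of_finite _) (fun _ => isClosed_Icc)
    fun k => ?_).mono hcover
  exact ((isAffineOn_interpolation _ _ _ _ _).congr (hpiece k k.2)).continuousOn

theorem uniformContinuousOn (hf : IsPolygonal f) : UniformContinuousOn f (Icc 0 1) :=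
  isCompact_Icc.uniformContinuousOn_of_continuous hf.continuousOn

theorem exists_rat_eq (hf : IsPolygonal f) (x : ℚ) (hx0 : 0 ≤ x) (hx1 : x ≤ 1) :
    ∃ r : ℚ, f x = r := by
  obtain ⟨m, p, q, hm, h0, h1, hinc, hpiece⟩ := hf
  obtain ⟨k, hk, hxk⟩ := exists_piece_of_le (p := fun j => (p j : ℝ)) (a := x)
    (fun k hk => by exact_mod_cast hinc k hk) hm (by simpa [h0] using hx0)
    (by simp only [h1, Rat.cast_one]; exact_mod_cast hx1)
  exact ⟨(q (k + 1) * (x - p k) + q k * (p (k + 1) - x)) / (p (k + 1) - p k),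
    by rw [hpiece k hk x hxk]; push_cast; rfl⟩

theorem of_isPiecewiseAffine {S : Finset ℚ} (hS : IsPiecewiseAffine S f)
    (hrat : ∀ x : ℚ, 0 ≤ x → x ≤ 1 → ∃ r : ℚ, f x = r) : IsPolygonal f := by
  choose! r hr using hrat
  set N := ∏ s ∈ S, s.den
  have hN : 0 < N := Finset.prod_pos fun s _ => s.den_pos
  have hN' : (0 : ℝ) < N := by exact_mod_cast hN
  refine ⟨N, fun k => k / N, fun k => r (k / N), hN, by simp, by simp [hN.ne'], fun k _ => ?_,
    fun k hk x hx => ?_⟩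
  · push_cast
    gcongr
    exact lt_add_one _
  · have hval : ∀ j ≤ N, f ((j : ℝ) / N) = r (j / N) := fun j hj => by
      simpa only [Rat.cast_div, Rat.cast_natCast] using
        hr (j / N) (by positivity) (by rw [div_le_one (by exact_mod_cast hN)]; exact_mod_cast hj)
    have hlt : (k : ℝ) / N < ((k + 1 : ℕ) : ℝ) / N := by gcongr; exact_mod_cast k.lt_succ_self
    have hgrid : IsAffineOn f (Icc ((k : ℝ) / N) (((k + 1 : ℕ) : ℝ) / N)) :=
      hS _ _ (by positivity) hlt (by rw [div_le_one hN']; exact_mod_cast hk)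
        fun s hs => by
          exact_mod_cast Rat.cast_notMem_Ioo_div_of_den_dvd hN (Finset.dvd_prod_of_mem _ hs) k
    simp only [Rat.cast_div, Rat.cast_natCast] at hx ⊢
    rw [hgrid.eq_interpolation hlt x hx, hval k hk.le, hval (k + 1) hk]

theorem sub (hf : IsPolygonal f) (hg : IsPolygonal g) : IsPolygonal fun x => f x - g x := by
  obtain ⟨S, hS⟩ := hf.exists_isPiecewiseAffine
  obtain ⟨T, hT⟩ := hg.exists_isPiecewiseAffine
  refine of_isPiecewiseAffine (hS.sub hT) fun x hx0 hx1 => ?_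
  obtain ⟨r, hr⟩ := hf.exists_rat_eq x hx0 hx1
  obtain ⟨r', hr'⟩ := hg.exists_rat_eq x hx0 hx1
  exact ⟨r - r', by rw [hr, hr']; push_cast; rfl⟩

theorem const_mul (hf : IsPolygonal f) (c : ℚ) : IsPolygonal fun x => (c : ℝ) * f x := by
  obtain ⟨m, p, q, hm, h0, h1, hinc, hpiece⟩ := hf
  exact ⟨m, p, fun k => c * q k, hm, h0, h1, hinc, fun k hk x hx => by
    simp only [hpiece k hk x hx]; push_cast; ring⟩

end IsPolygonal

theorem abs_sub_lt_of_mem_Icc {a b l l' u u' η ε : ℝ} (ha : a ∈ Icc l u) (hb : b ∈ Icc l' u')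
    (hu : u - l < η) (hu' : u' - l' < η) (hl : |l - l'| < ε) : |a - b| < η + ε := by
  rw [abs_sub_lt_iff] at hl ⊢
  constructor <;> linarith [ha.1, ha.2, hb.1, hb.2]

theorem stmt_13 (f : ℝ → ℝ)
    (hdarb : ∀ ε > (0:ℝ), ∃ flo fhi : ℝ → ℝ,
      IsPolygonal flo ∧ IsPolygonal fhi ∧
      (∀ x ∈ Set.Icc (0:ℝ) 1, flo x ≤ f x ∧ f x ≤ fhi x) ∧
      (∫ x in (0:ℝ)..1, fhi x - flo x) < ε) :
    ∀ ε > (0:ℝ), ∃ δ > (0:ℝ), ∃ g : ℝ → ℝ,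
      IsPolygonal g ∧
      (∀ x ∈ Set.Icc (0:ℝ) 1, 0 ≤ g x) ∧
      (∫ x in (0:ℝ)..1, g x) < 1/2 ∧
      ∀ x ∈ Set.Icc (0:ℝ) 1, ∀ y ∈ Set.Icc (0:ℝ) 1,
        max (g x) (g y) < 1 → |x - y| < δ → |f x - f y| < ε := by
  intro ε hε
  obtain ⟨c, hc⟩ := exists_rat_gt (2 / ε)
  have hc0 : (0 : ℝ) < c := (by positivity : (0 : ℝ) < 2 / ε).trans hc
  obtain ⟨flo, fhi, hlo, hhi, hsandwich, hint⟩ := hdarb (1 / (2 * c)) (by positivity)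
  obtain ⟨δ, hδ, hflo⟩ := Metric.uniformContinuousOn_iff.1 hlo.uniformContinuousOn (ε / 2)
    (by positivity)
  have hgap : ∀ z, c * (fhi z - flo z) < 1 → fhi z - flo z < ε / 2 := fun z hz => by
    rw [div_lt_iff₀ hε] at hc
    nlinarith
  refine ⟨δ, hδ, fun x => c * (fhi x - flo x), (hhi.sub hlo).const_mul c,
    fun x hx => mul_nonneg hc0.le (sub_nonneg.2 ((hsandwich x hx).1.trans (hsandwich x hx).2)),
    ?_, fun x hx y hy hg hxy => ?_⟩
  · rw [intervalIntegral.integral_const_mul]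
    calc (c : ℝ) * ∫ x in (0 : ℝ)..1, fhi x - flo x < c * (1 / (2 * c)) := by gcongr
      _ = 1 / 2 := by field_simp
  · rw [max_lt_iff] at hg
    have := abs_sub_lt_of_mem_Icc (hsandwich x hx) (hsandwich y hy) (hgap x hg.1) (hgap y hg.2)
      (hflo x hx y hy hxy)
    linarith
end
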